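/- arXiv:2605.12358 — 5 statements merged into one kernel-verified Lean document; each statement's English description precedes it below -/
import Mathlib

section
/- Let γ ≥ 0 be a real number and let G : ℕ × ℕ → ℝ be a function with G(L, D) ≥ 0 for all L, D. Suppose that for every D ≥ 1 and every L ≥ 0 it holds that G(L, D) ≤ γ · Σ_{k=0}^{L} G(k, D−1). Then for every D ≥ 1 and every L ≥ 0, G(L, D) ≤ γ^D · Σ_{k=0}^{L} C(L−k+D−1, D−1) · G(k, 0), where C(n, r) denotes the binomial coefficient. -/
set_option maxRecDepth 8000


open Finset

/-- Combinatorial core of the local sensitivity bound for a D-block LGSM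
without graph mixing: if `G L D ≤ γ · ∑_{k=0}^{L} G k (D-1)` for all `D ≥ 1`,
then `G L D ≤ γ^D · ∑_{k=0}^{L} C(L-k+D-1, D-1) · G k 0`. -/
theorem lgsm_sensitivity_no_mixing
    (γ : ℝ) (hγ : 0 ≤ γ)
    (G : ℕ → ℕ → ℝ)
    (hGnn : ∀ L D : ℕ, 0 ≤ G L D)
    (hrec : ∀ D : ℕ, 1 ≤ D → ∀ L : ℕ,
      G L D ≤ γ * ∑ k ∈ Finset.range (L + 1), G k (D - 1)) :
    ∀ D : ℕ, 1 ≤ D → ∀ L : ℕ,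
      G L D ≤ γ ^ D *
        ∑ k ∈ Finset.range (L + 1),
          (Nat.choose (L - k + D - 1) (D - 1) : ℝ) * G k 0 := by
  intro D hD
  induction D, hD using Nat.le_induction with
  | base =>
    intro L
    have := hrec 1 le_rfl L
    simpa using this
  | succ D hD ih =>
    intro L
    calc G L (D + 1) ≤ γ * ∑ j ∈ Finset.range (L + 1), G j D := by
          simpa using hrec (D + 1) (by omega) L
      _ ≤ γ * ∑ j ∈ Finset.range (L + 1),
            (γ ^ D * ∑ k ∈ Finset.range (j + 1),
              (Nat.choose (j - k + D - 1) (D - 1) : ℝ) * G k 0) := by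
          gcongr with j hj
          exact ih j
      _ = γ ^ (D + 1) * ∑ k ∈ Finset.range (L + 1),
            (Nat.choose (L - k + (D + 1) - 1) ((D + 1) - 1) : ℝ) * G k 0 := by
          rw [← Finset.mul_sum, ← mul_assoc, (by ring : γ * γ ^ D = γ ^ (D + 1))]
          congr 1
          have hswap : ∑ j ∈ Finset.range (L + 1), ∑ k ∈ Finset.range (j + 1),
              (Nat.choose (j - k + D - 1) (D - 1) : ℝ) * G k 0
              = ∑ k ∈ Finset.Ico 0 (L + 1), ∑ j ∈ Finset.Ico k (L + 1),
              (Nat.choose (j - k + D - 1) (D - 1) : ℝ) * G k 0 := by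
            rw [Finset.sum_Ico_Ico_comm 0 (L + 1)
              (fun k j => (Nat.choose (j - k + D - 1) (D - 1) : ℝ) * G k 0)]
            simp only [Finset.range_eq_Ico]
          rw [hswap]
          simp only [← Finset.range_eq_Ico]
          refine Finset.sum_congr rfl fun k hk => ?_
          rw [← Finset.sum_mul]
          have hk' : k ≤ L := by simpa [Nat.lt_succ_iff] using hk
          have hnat : ∑ j ∈ Finset.Ico k (L + 1), (j - k + D - 1).choose (D - 1)
              = (L - k + (D + 1) - 1).choose ((D + 1) - 1) := by
            rw [Finset.sum_Ico_eq_sum_range]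
            have hterm : ∀ i, (k + i - k + D - 1).choose (D - 1)
                = (i + (D - 1)).choose (D - 1) := by
              intro i; congr 1; omega
            rw [Finset.sum_congr rfl (fun i _ => hterm i),
              (by omega : L + 1 - k = (L - k) + 1), Nat.sum_range_add_choose]
            congr 1 <;> omega
          congr 1
          rw [← Nat.cast_sum, hnat]
end

section
/- Let γ ≥ 0 and a ≥ 0 be real numbers and let G : ℕ × ℕ → ℝ be a function with G(L, D) ≥ 0 for all L, D. Suppose that for every D ≥ 1 and every L ≥ 0 it holds that G(L, D) ≤ γ · Σ_{k=0}^{L} G(k, D−1) + γ · a · Σ_{k=0}^{L−1} G(k, D−1) (where the second sum is empty when L = 0). Then for every D ≥ 1 and every L ≥ 0, G(L, D) ≤ γ^D · Σ_{k=0}^{L} G(L−k, 0) · Σ_{m=0}^{min(k, D)} C(k−m+D−1, D−1) · C(D, m) · a^m, where C(n, r) denotes the binomial coefficient. -/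
open Finset

/-- The coefficient `∑_{m=0}^{min(k,D)} C(k-m+D-1, D-1)·C(D,m)·a^m`. -/
noncomputable def cc (a : ℝ) (k D : ℕ) : ℝ :=
  ∑ m ∈ Finset.range (min k D + 1),
    (Nat.choose (k - m + D - 1) (D - 1) : ℝ) * (Nat.choose D m : ℝ) * a ^ m

lemma cc_nonneg (a : ℝ) (ha : 0 ≤ a) (k D : ℕ) : 0 ≤ cc a k D := by
  apply Finset.sum_nonneg
  intro m _
  positivity

lemma cc_indicator (a : ℝ) (k D K : ℕ) (hK : k + 1 ≤ K) :
    cc a k D = ∑ m ∈ Finset.range K,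
      if m ≤ k then (Nat.choose (k - m + D - 1) (D - 1) : ℝ) * (Nat.choose D m : ℝ) * a ^ m
      else 0 := by
  rw [cc]
  rw [Finset.sum_congr rfl (fun m hm => ?_), Finset.sum_subset
    (Finset.range_subset_range.2 (le_trans (by omega : min k D + 1 ≤ k+1) hK)) ?_]
  · rintro m hm hnm
    simp only [Finset.mem_range, not_lt] at hnm
    by_cases h : m ≤ k
    · have hD : D < m := by omega
      simp [h, Nat.choose_eq_zero_of_lt hD]
    · simp [h]
  · rw [Finset.mem_range] at hm
    rw [if_pos (by omega)]

lemma cc_star (a : ℝ) (d k : ℕ) :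
    cc a (k+1) (d+2) = cc a k (d+2) + cc a (k+1) (d+1) + a * cc a k (d+1) := by
  rw [cc_indicator a (k+1) (d+2) (k+3) (by omega),
      cc_indicator a k (d+2) (k+3) (by omega),
      cc_indicator a (k+1) (d+1) (k+3) (by omega),
      cc_indicator a k (d+1) (k+2) (by omega)]
  have hshift : a * (∑ m ∈ Finset.range (k+2),
      if m ≤ k then (Nat.choose (k - m + (d+1) - 1) ((d+1) - 1) : ℝ) * (Nat.choose (d+1) m : ℝ) * a ^ m else 0)
      = ∑ m ∈ Finset.range (k+3),
        if 1 ≤ m ∧ m - 1 ≤ k then (Nat.choose (k - (m-1) + d) d : ℝ) * (Nat.choose (d+1) (m-1) : ℝ) * a ^ m else 0 := by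
    rw [Finset.sum_range_succ' _ (k+2), Finset.mul_sum]
    simp only [Nat.add_sub_cancel, Nat.le_add_left, true_and]
    rw [if_neg (by omega), add_zero]
    apply Finset.sum_congr rfl
    intro m hm
    by_cases h : m ≤ k
    · rw [if_pos h, if_pos h, show k - m + (d+1) - 1 = k - m + d from by omega]
      ring
    · rw [if_neg h, if_neg h, mul_zero]
  rw [hshift]
  rw [← Finset.sum_add_distrib, ← Finset.sum_add_distrib]
  apply Finset.sum_congr rfl
  intro m hm
  simp only [show d + 2 - 1 = d + 1 from by omega, show d + 1 - 1 = d from by omega]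
  rcases m with _ | m'
  · rw [if_pos (Nat.zero_le _), if_pos (Nat.zero_le _), if_pos (Nat.zero_le _),
        if_neg (by omega)]
    rw [show k + 1 - 0 + (d+2) - 1 = (k + (d+1)) + 1 from by omega,
        show k - 0 + (d+2) - 1 = k + (d+1) from by omega,
        show k + 1 - 0 + (d+1) - 1 = k + (d+1) from by omega]
    rw [Nat.choose_succ_succ (k + (d+1)) d]
    push_cast [Nat.choose_zero_right]
    ring
  · by_cases h : m' + 1 ≤ k
    · rw [if_pos (by omega), if_pos h, if_pos (by omega), if_pos (by omega)]
      rw [show k + 1 - (m'+1) + (d+2) - 1 = (k - (m'+1) + (d+1)) + 1 from by omega,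
          show k - (m'+1) + (d+2) - 1 = k - (m'+1) + (d+1) from by omega,
          show k + 1 - (m'+1) + (d+1) - 1 = k - (m'+1) + (d+1) from by omega,
          show k - (m'+1-1) + d = k - (m'+1) + (d+1) from by omega,
          show m' + 1 - 1 = m' from by omega]
      rw [Nat.choose_succ_succ (k - (m'+1) + (d+1)) d, Nat.choose_succ_succ (d+1) m']
      push_cast
      ring
    · by_cases h2 : m' + 1 ≤ k + 1
      · rw [if_pos h2, if_neg h, if_pos h2, if_pos (by omega)]
        rw [show k + 1 - (m'+1) + (d+2) - 1 = d + 1 from by omega,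
            show k + 1 - (m'+1) + (d+1) - 1 = d from by omega,
            show k - (m'+1-1) + d = d from by omega,
            show m' + 1 - 1 = m' from by omega]
        rw [Nat.choose_self, Nat.choose_self, Nat.choose_succ_succ (d+1) m']
        push_cast
        ring
      · rw [if_neg (by omega), if_neg (by omega), if_neg (by omega), if_neg (by omega)]
        ring

lemma cc_rec (a : ℝ) (d k : ℕ) :
    (∑ t ∈ Finset.range (k+1), cc a t (d+1)) + a * ∑ t ∈ Finset.range k, cc a t (d+1)
      = cc a k (d+2) := by
  induction k with
  | zero => simp [cc]
  | succ k ih =>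
    have ih' := ih
    rw [Finset.sum_range_succ] at ih'
    rw [Finset.sum_range_succ, Finset.sum_range_succ, mul_add, cc_star]
    linarith [ih']

lemma cc_one (a : ℝ) (k : ℕ) : cc a k 1 = 1 + (if 1 ≤ k then a else 0) := by
  rcases k with _ | k'
  · simp [cc]
  · rw [cc, show min (k'+1) 1 = 1 from by omega,
        Finset.sum_range_succ, Finset.sum_range_succ, Finset.sum_range_zero]
    simp

lemma conv_lemma (f g : ℕ → ℝ) (L : ℕ) :
    ∑ k ∈ Finset.range (L+1), ∑ j ∈ Finset.range (k+1), f (k - j) * g j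
    = ∑ k ∈ Finset.range (L+1), f (L - k) * ∑ t ∈ Finset.range (k+1), g t := by
  have h1 : ∀ k, ∑ j ∈ Finset.range (k+1), f (k - j) * g j
      = ∑ j ∈ Finset.range (k+1), f j * g (k - j) := by
    intro k
    rw [← Finset.sum_range_reflect]
    apply Finset.sum_congr rfl
    intro j hj
    rw [Finset.mem_range] at hj
    rw [show k + 1 - 1 - j = k - j from by omega, show k - (k - j) = j from by omega]
  simp only [h1]
  have h2 := Finset.sum_Ico_Ico_comm 0 (L+1) (fun i j => f i * g (j - i))
  simp only [← Finset.range_eq_Ico] at h2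
  rw [← h2]
  rw [← Finset.sum_range_reflect (fun k => f (L - k) * ∑ t ∈ Finset.range (k+1), g t) (L+1)]
  apply Finset.sum_congr rfl
  intro i hi
  rw [Finset.mem_range] at hi
  rw [Finset.sum_Ico_eq_sum_range]
  simp only [Nat.add_sub_cancel_left]
  rw [show L + 1 - 1 - i = L - i from by omega, show L - (L - i) = i from by omega,
      show L + 1 - i = L - i + 1 from by omega]
  rw [Finset.mul_sum]

lemma conv_lemma' (f g : ℕ → ℝ) (L : ℕ) :
    ∑ k ∈ Finset.range L, ∑ j ∈ Finset.range (k+1), f (k - j) * g j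
    = ∑ k ∈ Finset.range L, f (L - 1 - k) * ∑ t ∈ Finset.range (k+1), g t := by
  cases L with
  | zero => simp
  | succ L' =>
    have := conv_lemma f g L'
    simpa only [Nat.add_sub_cancel] using this

/-- Combinatorial core of the local sensitivity bound for a full D-block LGSM
with graph mixing: if
`G L D ≤ γ · ∑_{k=0}^{L} G k (D-1) + γ · a · ∑_{k=0}^{L-1} G k (D-1)` for all `D ≥ 1`,
then
`G L D ≤ γ^D · ∑_{k=0}^{L} G (L-k) 0 · ∑_{m=0}^{min(k,D)} C(k-m+D-1, D-1)·C(D,m)·a^m`. -/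
theorem lgsm_sensitivity_with_mixing
    (γ a : ℝ) (hγ : 0 ≤ γ) (ha : 0 ≤ a)
    (G : ℕ → ℕ → ℝ)
    (hGnn : ∀ L D : ℕ, 0 ≤ G L D)
    (hrec : ∀ D : ℕ, 1 ≤ D → ∀ L : ℕ,
      G L D ≤ γ * ∑ k ∈ Finset.range (L + 1), G k (D - 1)
              + γ * a * ∑ k ∈ Finset.range L, G k (D - 1)) :
    ∀ D : ℕ, 1 ≤ D → ∀ L : ℕ,
      G L D ≤ γ ^ D *
        ∑ k ∈ Finset.range (L + 1), G (L - k) 0 *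
          ∑ m ∈ Finset.range (min k D + 1),
            (Nat.choose (k - m + D - 1) (D - 1) : ℝ) * (Nat.choose D m : ℝ) * a ^ m := by
  have key : ∀ D : ℕ, 1 ≤ D → ∀ L : ℕ,
      G L D ≤ γ ^ D * ∑ k ∈ Finset.range (L+1), G (L - k) 0 * cc a k D := by
    intro D hD
    induction D, hD using Nat.le_induction with
    | base =>
      intro L
      have h := hrec 1 le_rfl L
      norm_num at h
      refine le_trans h (le_of_eq ?_)
      have e1 : ∑ k ∈ Finset.range (L+1), G (L - k) 0 = ∑ k ∈ Finset.range (L+1), G k 0 := by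
        rw [← Finset.sum_range_reflect (fun k => G k 0) (L+1)]
        apply Finset.sum_congr rfl
        intro k hk
        rw [show L + 1 - 1 - k = L - k from by omega]
      have e2 : ∑ k ∈ Finset.range (L+1), G (L - k) 0 * (if 1 ≤ k then a else 0)
          = a * ∑ k ∈ Finset.range L, G k 0 := by
        rw [Finset.sum_range_succ' _ L]
        simp only [Nat.le_add_left, if_pos, Nat.le_zero, Nat.sub_zero]
        rw [if_neg (by omega), mul_zero, add_zero]
        rw [← Finset.sum_range_reflect (fun k => G k 0) L, Finset.mul_sum]
        apply Finset.sum_congr rfl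
        intro k hk
        rw [show L - (k + 1) = L - 1 - k from by omega]
        ring
      simp only [cc_one, mul_add, Finset.sum_add_distrib, mul_one, e1, e2]
      ring
    | succ n hn ih =>
      intro L
      have h := hrec (n+1) (by omega) L
      simp only [Nat.add_sub_cancel] at h
      have hA : ∑ k ∈ Finset.range (L+1), G k n
          ≤ ∑ k ∈ Finset.range (L+1), γ ^ n * ∑ j ∈ Finset.range (k+1), G (k - j) 0 * cc a j n :=
        Finset.sum_le_sum fun k _ => ih k
      have hB : ∑ k ∈ Finset.range L, G k n
          ≤ ∑ k ∈ Finset.range L, γ ^ n * ∑ j ∈ Finset.range (k+1), G (k - j) 0 * cc a j n :=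
        Finset.sum_le_sum fun k _ => ih k
      refine le_trans h (le_trans (add_le_add (mul_le_mul_of_nonneg_left hA hγ)
        (mul_le_mul_of_nonneg_left hB (mul_nonneg hγ ha))) (le_of_eq ?_))
      obtain ⟨d, rfl⟩ : ∃ d, n = d + 1 := ⟨n - 1, by omega⟩
      rw [← Finset.mul_sum, ← Finset.mul_sum]
      have hPQ : (∑ k ∈ Finset.range (L+1), ∑ j ∈ Finset.range (k+1), G (k - j) 0 * cc a j (d+1))
          + a * (∑ k ∈ Finset.range L, ∑ j ∈ Finset.range (k+1), G (k - j) 0 * cc a j (d+1))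
          = ∑ k ∈ Finset.range (L+1), G (L - k) 0 * cc a k (d+2) := by
        rw [conv_lemma (fun i => G i 0) (fun j => cc a j (d+1)) L,
            conv_lemma' (fun i => G i 0) (fun j => cc a j (d+1)) L]
        simp only [← cc_rec a d, mul_add, Finset.sum_add_distrib]
        congr 1
        rw [Finset.sum_range_succ' _ L]
        simp only [Finset.range_zero, Finset.sum_empty, mul_zero, add_zero, Nat.sub_zero]
        rw [Finset.mul_sum]
        apply Finset.sum_congr rfl
        intro k hk
        rw [show L - (k + 1) = L - 1 - k from by omega]
        ring
      rw [← hPQ]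
      ring
  intro D hD L
  have := key D hD L
  simpa only [cc] using this
end

section
/- Let E, F, H, G₁, G₂, G₃ be real normed vector spaces, let L ≥ 1, and let f₀, …, f_L : E → F be functions each differentiable at a point x ∈ E. Let B : F → H, A : H → H, C : H → G₁, and T : G₂ → G₂ be continuous linear maps with operator norm ‖A‖ ≤ 1. Let σ_SSM : G₁ → G₂ be differentiable everywhere with ‖Dσ_SSM(z)‖ ≤ μ_SSM for all z, and let σ_MIX : G₂ → G₃ be differentiable everywhere with ‖Dσ_MIX(z)‖ ≤ μ_MIX for all z, where μ_SSM, μ_MIX ≥ 0. For t ∈ {L−1, L} define α_t : E → G₁ by α_t(x) = C(Σ_{k=0}^{t} A^k(B(f_{t−k}(x)))), and define y : E → G₃ by y(x) = σ_MIX(σ_SSM(α_L(x)) + T(σ_SSM(α_{L−1}(x)))). Then, with γ = μ_MIX · μ_SSM · ‖B‖ · ‖C‖, the Fréchet derivative of y at x satisfies ‖Dy(x)‖ ≤ γ · Σ_{k=0}^{L} ‖Df_k(x)‖ + γ · ‖T‖ · Σ_{k=0}^{L−1} ‖Df_k(x)‖. -/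
open Finset

/-!
Unroll the SSM recurrence: `α t` is a sum of the inputs `f (t - k)` pushed through the fixed
linear maps `C ∘ Aᵏ ∘ B`, each of norm at most `‖C‖ ‖B‖` because `‖A‖ ≤ 1`. So
`‖Dα_t‖ ≤ ‖B‖ ‖C‖ ∑_{k ≤ t} ‖Df_k‖`, and the chain rule through the `μ`-regular maps `σ_SSM`,
`σ_MIX` and the linear map `T` multiplies these bounds by `μ_SSM`, `μ_MIX` and `‖T‖`.
-/

theorem norm_pow_le_one_of_norm_le_one {R : Type*} [SeminormedRing R] {a : R}
    (h1 : ‖(1 : R)‖ ≤ 1) (ha : ‖a‖ ≤ 1) (n : ℕ) : ‖a ^ n‖ ≤ 1 := by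
  rcases Nat.eq_zero_or_pos n with rfl | hn
  · simpa using h1
  · exact (norm_pow_le' a hn).trans (pow_le_one₀ (norm_nonneg a) ha)

section FDerivBounds

variable {E F G : Type*}
  [NormedAddCommGroup E] [NormedSpace ℝ E]
  [NormedAddCommGroup F] [NormedSpace ℝ F]
  [NormedAddCommGroup G] [NormedSpace ℝ G]

theorem norm_fderiv_comp_le {σ : F → G} {g : E → F} {x : E} {μ : ℝ}
    (hσ : DifferentiableAt ℝ σ (g x)) (hσμ : ‖fderiv ℝ σ (g x)‖ ≤ μ)
    (hg : DifferentiableAt ℝ g x) :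
    ‖fderiv ℝ (fun x' => σ (g x')) x‖ ≤ μ * ‖fderiv ℝ g x‖ := by
  rw [fderiv_fun_comp x hσ hg]
  exact (ContinuousLinearMap.opNorm_comp_le _ _).trans
    (mul_le_mul_of_nonneg_right hσμ (norm_nonneg _))

theorem norm_fderiv_sum_clm_apply_le {ι : Type*} (s : Finset ι) (φ : ι → F →L[ℝ] G)
    (g : ι → E → F) {x : E} (hg : ∀ i ∈ s, DifferentiableAt ℝ (g i) x) {M : ℝ}
    (hφ : ∀ i ∈ s, ‖φ i‖ ≤ M) :
    ‖fderiv ℝ (fun x' => ∑ i ∈ s, φ i (g i x')) x‖ ≤ M * ∑ i ∈ s, ‖fderiv ℝ (g i) x‖ := by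
  rw [fderiv_fun_sum (A := fun i x' => φ i (g i x'))
    fun i hi => (φ i).differentiableAt.comp x (hg i hi), mul_sum]
  refine (norm_sum_le _ _).trans (sum_le_sum fun i hi => ?_)
  exact norm_fderiv_comp_le (φ i).differentiableAt (by rw [(φ i).fderiv]; exact hφ i hi) (hg i hi)

end FDerivBounds

section SSM

variable {E F H G : Type*}
  [NormedAddCommGroup F] [NormedSpace ℝ F]
  [NormedAddCommGroup H] [NormedSpace ℝ H]
  [NormedAddCommGroup G] [NormedSpace ℝ G]
  (A : H →L[ℝ] H) (B : F →L[ℝ] H) (C : H →L[ℝ] G) (f : ℕ → E → F)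

/-- The SSM layer `x_t = A x_{t-1} + B u_t`, `y_t = C x_t` started from `x_{-1} = 0`,
in closed form. -/
def ssmOutput (t : ℕ) (x : E) : G :=
  C (∑ k ∈ range (t + 1), (A ^ k) (B (f (t - k) x)))

theorem ssmOutput_eq_sum (t : ℕ) :
    ssmOutput A B C f t =
      fun x => ∑ k ∈ range (t + 1), (C.comp ((A ^ k).comp B)) (f (t - k) x) := by
  funext x
  simp [ssmOutput, map_sum]

variable [NormedAddCommGroup E] [NormedSpace ℝ E] {A B C f} {t : ℕ} {x : E}

theorem differentiableAt_ssmOutput (hf : ∀ k ≤ t, DifferentiableAt ℝ (f k) x) :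
    DifferentiableAt ℝ (ssmOutput A B C f t) x := by
  rw [ssmOutput_eq_sum]
  exact DifferentiableAt.fun_sum fun k _ => (ContinuousLinearMap.differentiableAt _).comp x
    (hf (t - k) (Nat.sub_le t k))

theorem norm_fderiv_ssmOutput_le (hA : ‖A‖ ≤ 1) (hf : ∀ k ≤ t, DifferentiableAt ℝ (f k) x) :
    ‖fderiv ℝ (ssmOutput A B C f t) x‖ ≤ ‖B‖ * ‖C‖ * ∑ k ∈ range (t + 1), ‖fderiv ℝ (f k) x‖ := by
  have hφ : ∀ k ∈ range (t + 1), ‖C.comp ((A ^ k).comp B)‖ ≤ ‖B‖ * ‖C‖ := fun k _ =>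
    calc ‖C.comp ((A ^ k).comp B)‖ ≤ ‖C‖ * (‖A ^ k‖ * ‖B‖) :=
          (C.opNorm_comp_le _).trans (mul_le_mul_of_nonneg_left
            (ContinuousLinearMap.opNorm_comp_le _ _) (norm_nonneg C))
      _ ≤ ‖C‖ * (1 * ‖B‖) := by
          gcongr
          exact norm_pow_le_one_of_norm_le_one ContinuousLinearMap.norm_id_le hA k
      _ = ‖B‖ * ‖C‖ := by ring
  rw [ssmOutput_eq_sum, ← sum_range_reflect (fun k => ‖fderiv ℝ (f k) x‖)]
  simp only [add_tsub_cancel_right]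
  exact norm_fderiv_sum_clm_apply_le _ _ _
    (fun k _ => hf (t - k) (Nat.sub_le t k)) hφ

end SSM

theorem norm_fderiv_graphMix_le {E G₁ G₂ G₃ : Type*}
    [NormedAddCommGroup E] [NormedSpace ℝ E]
    [NormedAddCommGroup G₁] [NormedSpace ℝ G₁]
    [NormedAddCommGroup G₂] [NormedSpace ℝ G₂]
    [NormedAddCommGroup G₃] [NormedSpace ℝ G₃]
    {σSSM : G₁ → G₂} {σMIX : G₂ → G₃} {μSSM μMIX : ℝ} (T : G₂ →L[ℝ] G₂)
    (hσSSM : Differentiable ℝ σSSM) (hσSSMμ : ∀ z, ‖fderiv ℝ σSSM z‖ ≤ μSSM)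
    (hσMIX : Differentiable ℝ σMIX) (hσMIXμ : ∀ z, ‖fderiv ℝ σMIX z‖ ≤ μMIX)
    {u v : E → G₁} {x : E} (hu : DifferentiableAt ℝ u x) (hv : DifferentiableAt ℝ v x) :
    ‖fderiv ℝ (fun x' => σMIX (σSSM (u x') + T (σSSM (v x')))) x‖ ≤
      μMIX * (μSSM * ‖fderiv ℝ u x‖ + ‖T‖ * (μSSM * ‖fderiv ℝ v x‖)) := by
  have hSu : DifferentiableAt ℝ (fun x' => σSSM (u x')) x := (hσSSM _).comp x hu
  have hTSv : DifferentiableAt ℝ (fun x' => T (σSSM (v x'))) x :=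
    T.differentiableAt.comp x ((hσSSM _).comp x hv)
  have hTSv_le : ‖fderiv ℝ (fun x' => T (σSSM (v x'))) x‖ ≤ ‖T‖ * (μSSM * ‖fderiv ℝ v x‖) :=
    (norm_fderiv_comp_le T.differentiableAt (by rw [T.fderiv]) ((hσSSM _).comp x hv)).trans
      (mul_le_mul_of_nonneg_left (norm_fderiv_comp_le (hσSSM _) (hσSSMμ _) hv) (norm_nonneg T))
  have hμMIX : 0 ≤ μMIX := (norm_nonneg _).trans (hσMIXμ 0)
  refine (norm_fderiv_comp_le (hσMIX _) (hσMIXμ _) (hSu.add hTSv)).trans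
    (mul_le_mul_of_nonneg_left ?_ hμMIX)
  rw [fderiv_add hSu hTSv]
  exact (norm_add_le _ _).trans
    (add_le_add (norm_fderiv_comp_le (hσSSM _) (hσSSMμ _) hu) hTSv_le)

theorem lgsm_one_block_sensitivity_general
    {E F H G₁ G₂ G₃ : Type*}
    [NormedAddCommGroup E] [NormedSpace ℝ E]
    [NormedAddCommGroup F] [NormedSpace ℝ F]
    [NormedAddCommGroup H] [NormedSpace ℝ H]
    [NormedAddCommGroup G₁] [NormedSpace ℝ G₁]
    [NormedAddCommGroup G₂] [NormedSpace ℝ G₂]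
    [NormedAddCommGroup G₃] [NormedSpace ℝ G₃]
    (L : ℕ) (hL : 1 ≤ L) (f : ℕ → E → F) (x : E)
    (hf : ∀ k ≤ L, DifferentiableAt ℝ (f k) x)
    (B : F →L[ℝ] H) (A : H →L[ℝ] H) (C : H →L[ℝ] G₁) (T : G₂ →L[ℝ] G₂)
    (hA : ‖A‖ ≤ 1)
    (μSSM μMIX : ℝ)
    (σSSM : G₁ → G₂) (hσSSM : Differentiable ℝ σSSM)
    (hσSSMμ : ∀ z : G₁, ‖fderiv ℝ σSSM z‖ ≤ μSSM)
    (σMIX : G₂ → G₃) (hσMIX : Differentiable ℝ σMIX)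
    (hσMIXμ : ∀ z : G₂, ‖fderiv ℝ σMIX z‖ ≤ μMIX)
    (α : ℕ → E → G₁)
    (hα : ∀ t : ℕ, ∀ x' : E,
      α t x' = C (∑ k ∈ Finset.range (t + 1), (A ^ k) (B (f (t - k) x'))))
    (y : E → G₃)
    (hy : ∀ x' : E, y x' = σMIX (σSSM (α L x') + T (σSSM (α (L - 1) x')))) :
    ‖fderiv ℝ y x‖ ≤
      (μMIX * μSSM * ‖B‖ * ‖C‖) * ∑ k ∈ Finset.range (L + 1), ‖fderiv ℝ (f k) x‖
      + (μMIX * μSSM * ‖B‖ * ‖C‖) * ‖T‖ * ∑ k ∈ Finset.range L, ‖fderiv ℝ (f k) x‖ := by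
  obtain rfl : α = ssmOutput A B C f := funext fun t => funext (hα t)
  obtain rfl : y = fun x' => σMIX (σSSM (ssmOutput A B C f L x') +
      T (σSSM (ssmOutput A B C f (L - 1) x'))) := funext hy
  have hfL' : ∀ k ≤ L - 1, DifferentiableAt ℝ (f k) x := fun k hk => hf k (hk.trans (L.sub_le 1))
  have hDαL := norm_fderiv_ssmOutput_le (B := B) (C := C) hA hf
  have hDαL' := norm_fderiv_ssmOutput_le (B := B) (C := C) hA hfL'
  rw [Nat.sub_add_cancel hL] at hDαL'
  have hμSSM : 0 ≤ μSSM := (norm_nonneg _).trans (hσSSMμ 0)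
  have hμMIX : 0 ≤ μMIX := (norm_nonneg _).trans (hσMIXμ 0)
  calc _ ≤ _ := norm_fderiv_graphMix_le T hσSSM hσSSMμ hσMIX hσMIXμ
        (differentiableAt_ssmOutput hf) (differentiableAt_ssmOutput hfL')
    _ ≤ μMIX * (μSSM * (‖B‖ * ‖C‖ * ∑ k ∈ range (L + 1), ‖fderiv ℝ (f k) x‖) +
          ‖T‖ * (μSSM * (‖B‖ * ‖C‖ * ∑ k ∈ range L, ‖fderiv ℝ (f k) x‖))) := by
        gcongr
    _ = _ := by ring

/-- Local sensitivity for a 1-block LGSM of sequence length `L` with graph mixing: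
with `α_t x = C (∑_{k=0}^t A^k (B (f (t-k) x)))` for `t ∈ {L-1, L}` and
`y x = σ_MIX (σ_SSM (α_L x) + T (σ_SSM (α_{L-1} x)))`, we have
`‖Dy(x)‖ ≤ γ ∑_{k=0}^L ‖Df_k(x)‖ + γ‖T‖ ∑_{k=0}^{L-1} ‖Df_k(x)‖`
where `γ = μ_MIX · μ_SSM · ‖B‖ · ‖C‖`. -/
theorem lgsm_one_block_sensitivity
    {E F H G₁ G₂ G₃ : Type*}
    [NormedAddCommGroup E] [NormedSpace ℝ E]
    [NormedAddCommGroup F] [NormedSpace ℝ F]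
    [NormedAddCommGroup H] [NormedSpace ℝ H]
    [NormedAddCommGroup G₁] [NormedSpace ℝ G₁]
    [NormedAddCommGroup G₂] [NormedSpace ℝ G₂]
    [NormedAddCommGroup G₃] [NormedSpace ℝ G₃]
    (L : ℕ) (hL : 1 ≤ L) (f : ℕ → E → F) (x : E)
    (hf : ∀ k ≤ L, DifferentiableAt ℝ (f k) x)
    (B : F →L[ℝ] H) (A : H →L[ℝ] H) (C : H →L[ℝ] G₁) (T : G₂ →L[ℝ] G₂)
    (hA : ‖A‖ ≤ 1)
    (μSSM μMIX : ℝ) (hμSSM : 0 ≤ μSSM) (hμMIX : 0 ≤ μMIX)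
    (σSSM : G₁ → G₂) (hσSSM : Differentiable ℝ σSSM)
    (hσSSMμ : ∀ z : G₁, ‖fderiv ℝ σSSM z‖ ≤ μSSM)
    (σMIX : G₂ → G₃) (hσMIX : Differentiable ℝ σMIX)
    (hσMIXμ : ∀ z : G₂, ‖fderiv ℝ σMIX z‖ ≤ μMIX)
    (α : ℕ → E → G₁)
    (hα : ∀ t : ℕ, ∀ x' : E,
      α t x' = C (∑ k ∈ Finset.range (t + 1), (A ^ k) (B (f (t - k) x'))))
    (y : E → G₃)
    (hy : ∀ x' : E, y x' = σMIX (σSSM (α L x') + T (σSSM (α (L - 1) x')))) :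
    ‖fderiv ℝ y x‖ ≤
      (μMIX * μSSM * ‖B‖ * ‖C‖) * ∑ k ∈ Finset.range (L + 1), ‖fderiv ℝ (f k) x‖
      + (μMIX * μSSM * ‖B‖ * ‖C‖) * ‖T‖ * ∑ k ∈ Finset.range L, ‖fderiv ℝ (f k) x‖ :=
  lgsm_one_block_sensitivity_general L hL f x hf B A C T hA μSSM μMIX σSSM hσSSM hσSSMμ σMIX hσMIX
    hσMIXμ α hα y hy
end

section
/- Let G be a finite undirected simple graph whose girth is strictly greater than 2k for some k ≥ 1, and let v, w be vertices with graph distance dist(v, w) = k. Then the number of non-backtracking walks of length k from v to w equals 1. -/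
open Finset

/-- A walk is non-backtracking if it never immediately reverses an edge,
i.e. `v_{i+2} ≠ v_i` for all applicable `i`. -/
def SimpleGraph.Walk.IsNonBacktracking {V : Type*} {G : SimpleGraph V} {u v : V}
    (p : G.Walk u v) : Prop :=
  ∀ i : ℕ, i + 2 ≤ p.length → p.getVert (i + 2) ≠ p.getVert i

/-!
A walk of length `dist v w` is a shortest walk, hence a path, and a path never backtracks.
Two distinct paths from `v` to `w` contain a cycle of length at most the sum of their lengths,
so two distinct shortest paths would give a cycle of length at most `2k`, below the girth.
-/

namespace SimpleGraph

variable {V : Type*} {G : SimpleGraph V} {u v : V}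

lemma Walk.IsPath.isNonBacktracking {p : G.Walk u v} (hp : p.IsPath) : p.IsNonBacktracking :=
  fun i hi hback => by
    have := hp.getVert_injOn (show i + 2 ≤ p.length from hi) (show i ≤ p.length by omega) hback
    omega

lemma Walk.IsPath.eq_of_length_add_lt_egirth {p q : G.Walk u v} (hp : p.IsPath) (hq : q.IsPath)
    (hlt : ((p.length + q.length : ℕ) : ℕ∞) < G.egirth) : p = q := by
  by_contra hne
  obtain ⟨_, -, -, c, hc, hlen⟩ := hp.exists_isCycle_length_le_add_of_ne hq hne
  exact ((egirth_le_length hc).trans (by exact_mod_cast hlen)).not_gt hlt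

lemma Walk.eq_of_length_eq_dist_of_two_mul_dist_lt_egirth {p q : G.Walk u v}
    (hgirth : ((2 * G.dist u v : ℕ) : ℕ∞) < G.egirth)
    (hp : p.length = G.dist u v) (hq : q.length = G.dist u v) : p = q :=
  (p.isPath_of_length_eq_dist hp).eq_of_length_add_lt_egirth (q.isPath_of_length_eq_dist hq)
    (by rwa [hp, hq, ← two_mul])

end SimpleGraph

theorem unique_nonBacktracking_walk_of_high_girth_general
    {V : Type*}
    (G : SimpleGraph V)
    (k : ℕ) (hk : 1 ≤ k)
    (hgirth : (2 * k : ℕ∞) < G.girth)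
    (v w : V) (hdist : G.dist v w = k) :
    Nat.card {p : G.Walk v w // p.length = k ∧ p.IsNonBacktracking} = 1 := by
  subst hdist
  have hegirth : ((2 * G.dist v w : ℕ) : ℕ∞) < G.egirth :=
    (by exact_mod_cast hgirth : _ < (G.girth : ℕ∞)).trans_le G.egirth.natCast_toNat_le_self
  obtain ⟨p₀, hp₀⟩ := G.exists_walk_of_dist_ne_zero (by omega : G.dist v w ≠ 0)
  rw [Nat.card_eq_one_iff_exists]
  refine ⟨⟨p₀, hp₀, (p₀.isPath_of_length_eq_dist hp₀).isNonBacktracking⟩, ?_⟩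
  rintro ⟨p, hp, -⟩
  exact Subtype.ext <|
    SimpleGraph.Walk.eq_of_length_eq_dist_of_two_mul_dist_lt_egirth hegirth hp hp₀

/-- In a graph of girth greater than `2k`, two vertices at distance exactly `k`
are joined by a unique non-backtracking walk of length `k`. -/
theorem unique_nonBacktracking_walk_of_high_girth
    {V : Type*} [Fintype V] [DecidableEq V]
    (G : SimpleGraph V) [DecidableRel G.Adj]
    (k : ℕ) (hk : 1 ≤ k)
    (hgirth : (2 * k : ℕ∞) < G.girth)
    (v w : V) (hdist : G.dist v w = k) :
    Nat.card {p : G.Walk v w // p.length = k ∧ p.IsNonBacktracking} = 1 :=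
  unique_nonBacktracking_walk_of_high_girth_general G k hk hgirth v w hdist
end

section
/- Let c be a real number with 0 < c < 1 and let d ≥ 2 be an integer with (d−1)/d ≤ c. Then for every k ≥ 1, every finite undirected simple d-regular graph G with girth strictly greater than 2k, and every pair of vertices v, w with dist(v, w) = k, the influences I^A = (A^k)_{vw} / Σ_u (A^k)_{vu} and I^B = N_k(v, w) / Σ_u N_k(v, u) satisfy I^A / I^B ≤ c^{k−1}, where A is the adjacency matrix of G and N_k(v, u) denotes the number of non-backtracking walks of length k from v to u. In particular, the adjacency-based influence decays exponentially faster in k than the non-backtracking influence. -/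
open Finset Matrix

/-!
When `dist v w = k` and the girth exceeds `2k`, there is exactly one walk of length `k` from `v`
to `w`: two of them are shortest paths, and two distinct paths would close a cycle of length at
most `2k`. Being a path, it is non-backtracking, so both numerators equal `1`. In a `d`-regular
graph the rows of `A^k` sum to `d^k`, while a non-backtracking walk has `d` choices for its first
step and `d - 1` for each later one, so there are `d (d - 1)^(k - 1)` of length `k` from `v`.
The ratio of the influences is therefore `((d - 1) / d)^(k - 1) ≤ c^(k - 1)`.
-/

namespace SimpleGraph

variable {V : Type*} {G : SimpleGraph V}

namespace Walk

variable {u v w : V}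

lemma isNonBacktracking_nil : (nil : G.Walk u u).IsNonBacktracking := fun i hi => by
  simp at hi

lemma isNonBacktracking_cons_iff (h : G.Adj u v) (q : G.Walk v w) :
    (cons h q).IsNonBacktracking ↔ q.IsNonBacktracking ∧ q.snd ≠ u := by
  simp only [IsNonBacktracking, length_cons]
  constructor
  · intro hp
    refine ⟨fun i hi => by simpa using hp (i + 1) (by omega), ?_⟩
    cases q with
    | nil => exact h.ne'
    | cons h' q => simpa using hp 0 (by simp)
  · rintro ⟨hq, hsnd⟩ (_ | i) hi
    · simpa using hsnd
    · simpa using hq i (by omega)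

lemma IsPath.isNonBacktracking_s14 {p : G.Walk u v} (hp : p.IsPath) : p.IsNonBacktracking :=
  fun i hi heq => by
    have := hp.getVert_injOn (by simp; omega) (by simp; omega) heq
    omega

lemma eq_of_length_eq_dist (hg : 2 * G.dist u v < G.girth) {p q : G.Walk u v}
    (hp : p.length = G.dist u v) (hq : q.length = G.dist u v) : p = q := by
  by_contra hne
  obtain ⟨_, -, -, c, hc, hlen⟩ :=
    (p.isPath_of_length_eq_dist hp).exists_isCycle_length_le_add_of_ne
      (q.isPath_of_length_eq_dist hq) hne
  have := G.girth_le_length hc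
  omega

end Walk

lemma existsUnique_walk_length_eq_dist {u v : V} (hr : G.Reachable u v)
    (hg : 2 * G.dist u v < G.girth) : ∃! p : G.Walk u v, p.length = G.dist u v :=
  let ⟨p, hp⟩ := hr.exists_walk_length_eq_dist
  ⟨p, hp, fun _ hq => Walk.eq_of_length_eq_dist hg hq hp⟩

instance [DecidableEq V] [G.LocallyFinite] {u v : V} (n : ℕ) (P : G.Walk u v → Prop) :
    Finite {p : G.Walk u v // p.length = n ∧ P p} :=
  Finite.of_injective (fun p => (⟨p.1, p.2.1⟩ : {p : G.Walk u v // p.length = n}))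
    fun _ _ h => Subtype.ext (Subtype.mk.inj h)

section Counting

variable [Fintype V] [DecidableRel G.Adj]

def nonBacktrackingConsEquiv (P : V → Prop) [DecidablePred P] (x u : V) (n : ℕ) :
    {p : G.Walk x u // p.length = n + 1 ∧ p.IsNonBacktracking ∧ P p.snd} ≃
      Σ a : (G.neighborFinset x).filter P,
        {q : G.Walk a.1 u // q.length = n ∧ q.IsNonBacktracking ∧ q.snd ≠ x} where
  toFun
    | ⟨.cons h q, hp⟩ =>
      ⟨⟨_, by simpa [h] using hp.2.2⟩, ⟨q, by simpa using hp.1,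
        (Walk.isNonBacktracking_cons_iff h q).1 hp.2.1⟩⟩
  invFun
    | ⟨⟨a, ha⟩, ⟨q, hq⟩⟩ =>
      have ha := mem_filter.1 ha
      ⟨.cons ((mem_neighborFinset _ _ _).1 ha.1) q, by simpa using hq.1,
        (Walk.isNonBacktracking_cons_iff _ q).2 hq.2, by simpa using ha.2⟩
  left_inv
    | ⟨.cons _ _, _⟩ => rfl
  right_inv
    | ⟨⟨_, _⟩, ⟨_, _⟩⟩ => rfl

variable [DecidableEq V] {d : ℕ}

lemma sum_card_nonBacktracking_succ (P : V → Prop) [DecidablePred P] (x : V) (n : ℕ) :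
    ∑ u, Nat.card {p : G.Walk x u // p.length = n + 1 ∧ p.IsNonBacktracking ∧ P p.snd} =
      ∑ a ∈ G.neighborFinset x with P a,
        ∑ u, Nat.card {q : G.Walk a u // q.length = n ∧ q.IsNonBacktracking ∧ q.snd ≠ x} := by
  rw [Finset.sum_comm]
  refine Finset.sum_congr rfl fun u _ => ?_
  rw [Nat.card_congr (nonBacktrackingConsEquiv P x u n), Nat.card_sigma]
  exact Finset.sum_coe_sort _ fun a =>
    Nat.card {q : G.Walk a u // q.length = n ∧ q.IsNonBacktracking ∧ q.snd ≠ x}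

lemma sum_card_nonBacktracking_snd_ne (hreg : G.IsRegularOfDegree d) (n : ℕ) {x y : V}
    (hxy : G.Adj x y) :
    ∑ u, Nat.card {p : G.Walk x u // p.length = n ∧ p.IsNonBacktracking ∧ p.snd ≠ y} =
      (d - 1) ^ n := by
  induction n generalizing x y with
  | zero =>
    rw [Fintype.sum_eq_single x fun u hu => ?_]
    · refine Nat.card_eq_one_iff_exists.2
        ⟨⟨.nil, rfl, Walk.isNonBacktracking_nil, by simpa using hxy.ne⟩, ?_⟩
      rintro ⟨p, hp, -⟩
      exact Subtype.ext (Walk.eq_nil_iff_nil.2 (Walk.length_eq_zero_iff.1 hp))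
    · exact Nat.card_eq_zero.2 (.inl ⟨fun p => hu (p.1.eq_of_length_eq_zero p.2.1).symm⟩)
  | succ n ih =>
    rw [sum_card_nonBacktracking_succ (· ≠ y), Finset.sum_congr rfl fun a ha =>
        ih ((mem_neighborFinset _ _ _).1 (mem_filter.1 ha).1).symm,
      sum_const, filter_ne', card_erase_of_mem ((mem_neighborFinset _ _ _).2 hxy),
      card_neighborFinset_eq_degree, hreg x, smul_eq_mul, pow_succ']

lemma sum_card_nonBacktracking (hreg : G.IsRegularOfDegree d) (x : V) (n : ℕ) :
    ∑ u, Nat.card {p : G.Walk x u // p.length = n + 1 ∧ p.IsNonBacktracking} =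
      d * (d - 1) ^ n := by
  have h := sum_card_nonBacktracking_succ (G := G) (fun _ => True) x n
  simp only [and_true, filter_true] at h
  rw [h, Finset.sum_congr rfl fun a ha =>
      sum_card_nonBacktracking_snd_ne hreg n ((mem_neighborFinset _ _ _).1 ha).symm,
    sum_const, card_neighborFinset_eq_degree, hreg x, smul_eq_mul]

lemma sum_adjMatrix_pow_apply {R : Type*} [Semiring R] (hreg : G.IsRegularOfDegree d)
    (k : ℕ) (v : V) : ∑ u, (G.adjMatrix R ^ k) v u = (d : R) ^ k := by
  induction k generalizing v with
  | zero => simp [Matrix.one_apply]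
  | succ k ih =>
    simp only [pow_succ', Matrix.mul_apply]
    rw [Finset.sum_comm]
    simp only [← Finset.mul_sum, ih]
    exact adjMatrix_mulVec_const_apply_of_regular hreg

end Counting

end SimpleGraph

open SimpleGraph in
theorem influence_decay_exponentially_faster_general
    (c : ℝ)
    (d : ℕ) (hd : 2 ≤ d) (hdc : ((d : ℝ) - 1) / (d : ℝ) ≤ c) :
    ∀ (k : ℕ), 1 ≤ k →
    ∀ (V : Type) [Fintype V] [DecidableEq V]
      (G : SimpleGraph V) [DecidableRel G.Adj],
      G.IsRegularOfDegree d →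
      (2 * k : ℕ∞) < G.girth →
      ∀ v w : V, G.dist v w = k →
        (((G.adjMatrix ℝ ^ k) v w) / ∑ u : V, (G.adjMatrix ℝ ^ k) v u) /
          ((Nat.card {p : G.Walk v w // p.length = k ∧ p.IsNonBacktracking} : ℝ) /
            ∑ u : V, (Nat.card {p : G.Walk v u // p.length = k ∧ p.IsNonBacktracking} : ℝ))
        ≤ c ^ (k - 1) := by
  intro k hk V _ _ G _ hreg hgirth v w hdist
  obtain ⟨m, rfl⟩ : ∃ m, k = m + 1 := ⟨k - 1, by omega⟩
  obtain ⟨p₀, hp₀, huniq⟩ := existsUnique_walk_length_eq_dist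
    (Reachable.of_dist_ne_zero (by omega : G.dist v w ≠ 0)) (by rw [hdist]; exact_mod_cast hgirth)
  rw [hdist] at hp₀ huniq
  have hwalks : Fintype.card {p : G.Walk v w | p.length = m + 1} = 1 :=
    Fintype.card_eq_one_iff.2 ⟨⟨p₀, hp₀⟩, fun p => Subtype.ext (huniq p.1 p.2)⟩
  have hnb : Nat.card {p : G.Walk v w // p.length = m + 1 ∧ p.IsNonBacktracking} = 1 :=
    Nat.card_eq_one_iff_exists.2 ⟨⟨p₀, hp₀, (p₀.isPath_of_length_eq_dist
      (hp₀.trans hdist.symm)).isNonBacktracking_s14⟩, fun p => Subtype.ext (huniq p.1 p.2.1)⟩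
  rw [adjMatrix_pow_apply_eq_card_walk, hwalks, sum_adjMatrix_pow_apply hreg, hnb,
    ← Nat.cast_sum, sum_card_nonBacktracking hreg, Nat.add_sub_cancel]
  push_cast [Nat.cast_sub (by omega : 1 ≤ d)]
  have hd1 : (1 : ℝ) ≤ d := by exact_mod_cast (by omega : 1 ≤ d)
  have hd0 : (d : ℝ) ≠ 0 := by positivity
  calc _ = (((d : ℝ) - 1) / d) ^ m := by rw [div_pow]; field_simp; ring
    _ ≤ c ^ m := pow_le_pow_left₀ (div_nonneg (by linarith) (by positivity)) hdc m

/-- For `0 < c < 1` and `d ≥ 2` with `(d−1)/d ≤ c`: in every finite `d`-regular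
graph of girth `> 2k`, for vertices at distance `k ≥ 1`, the ratio of the
adjacency-based influence to the non-backtracking influence is at most `c^{k−1}`:
the adjacency influence decays exponentially faster in `k`. -/
theorem influence_decay_exponentially_faster
    (c : ℝ) (hc0 : 0 < c) (hc1 : c < 1)
    (d : ℕ) (hd : 2 ≤ d) (hdc : ((d : ℝ) - 1) / (d : ℝ) ≤ c) :
    ∀ (k : ℕ), 1 ≤ k →
    ∀ (V : Type) [Fintype V] [DecidableEq V]
      (G : SimpleGraph V) [DecidableRel G.Adj],
      G.IsRegularOfDegree d →
      (2 * k : ℕ∞) < G.girth →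
      ∀ v w : V, G.dist v w = k →
        (((G.adjMatrix ℝ ^ k) v w) / ∑ u : V, (G.adjMatrix ℝ ^ k) v u) /
          ((Nat.card {p : G.Walk v w // p.length = k ∧ p.IsNonBacktracking} : ℝ) /
            ∑ u : V, (Nat.card {p : G.Walk v u // p.length = k ∧ p.IsNonBacktracking} : ℝ))
        ≤ c ^ (k - 1) :=
  influence_decay_exponentially_faster_general c d hd hdc
end
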